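/- arXiv:1611.08994 — 6 statements merged into one kernel-verified Lean document; each statement's English description precedes it below -/
import Mathlib

section
/- Let G be a finitely generated group acting continuously on a compact metric space X. If the action T is expansive and has the pseudo-orbit tracing property, then T is topologically stable. Moreover, for a finite generating set A and for ε>0 with 3ε less than an expansive constant η of T, there exists δ>0 such that if S is a continuous action of G on X with d_A(T,S)<δ, then there is a unique continuous map f:X→X with T_g∘f = f∘S_g for all g∈G and sup_x d(f(x),x) ≤ ε. -/
/-- A continuous action of a group `G` on a topological space `X`. -/
def IsContAction {G X : Type*} [Group G] [TopologicalSpace X] (T : G → X → X) : Prop :=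
  (∀ g, Continuous (T g)) ∧ (∀ x, T 1 x = x) ∧ ∀ g h x, T (g * h) x = T g (T h x)

/-- `{x_g}` is a `δ` pseudo-orbit of `T` with respect to the generating set `A`. -/
def IsPseudoOrbit {G X : Type*} [Group G] [MetricSpace X] (T : G → X → X) (A : Set G)
    (δ : ℝ) (x : G → X) : Prop :=
  ∀ a ∈ A, ∀ g : G, dist (T a (x g)) (x (a * g)) < δ

/-- The point `y` `ε`-traces the pseudo-orbit `{x_g}`. -/
def Traces {G X : Type*} [Group G] [MetricSpace X] (T : G → X → X) (ε : ℝ)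
    (x : G → X) (y : X) : Prop :=
  ∀ g : G, dist (T g y) (x g) < ε

/-- `T` has the pseudo-orbit tracing property with respect to the generating set `A`. -/
def POTPWrt {G X : Type*} [Group G] [MetricSpace X] (T : G → X → X) (A : Set G) : Prop :=
  ∀ ε > (0 : ℝ), ∃ δ > (0 : ℝ), ∀ x : G → X, IsPseudoOrbit T A δ x → ∃ y : X, Traces T ε x y

/-- `T` is `A`-topologically stable. -/
def TopStableWrt {G X : Type*} [Group G] [MetricSpace X] (T : G → X → X) (A : Set G) : Prop :=
  ∀ ε > (0 : ℝ), ∃ δ > (0 : ℝ), ∀ S : G → X → X, IsContAction S →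
    (∀ a ∈ A, ∀ x : X, dist (T a x) (S a x) < δ) →
    ∃ f : X → X, Continuous f ∧ (∀ g x, T g (f x) = f (S g x)) ∧ ∀ x, dist (f x) x ≤ ε

/-- `T` is expansive with expansive constant `c`. -/
def ExpansiveWith {G X : Type*} [Group G] [MetricSpace X] (T : G → X → X) (c : ℝ) : Prop :=
  0 < c ∧ ∀ x y : X, x ≠ y → ∃ g : G, dist (T g x) (T g y) > c

lemma uniform_expansive_aux {G X : Type*} [Group G] [MetricSpace X] [CompactSpace X]
    (T : G → X → X) (hcont : ∀ g, Continuous (T g)) (η : ℝ)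
    (hexp : ∀ x y : X, x ≠ y → ∃ g : G, dist (T g x) (T g y) > η)
    (ρ : ℝ) (hρ : 0 < ρ) :
    ∃ F : Finset G, ∀ y y' : X, (∀ g ∈ F, dist (T g y) (T g y') ≤ η) → dist y y' < ρ := by
  set K : Set (X × X) := {p | ρ ≤ dist p.1 p.2} with hK
  have hdistc : Continuous fun p : X × X => dist p.1 p.2 :=
    continuous_fst.dist continuous_snd
  have hKcl : IsClosed K := isClosed_le continuous_const hdistc
  have hKc : IsCompact K := hKcl.isCompact
  set U : G → Set (X × X) := fun g => {p | η < dist (T g p.1) (T g p.2)} with hU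
  have hUopen : ∀ g, IsOpen (U g) := fun g =>
    isOpen_lt continuous_const (((hcont g).comp continuous_fst).dist ((hcont g).comp continuous_snd))
  have hcov : K ⊆ ⋃ g, U g := by
    intro p hp
    have hne : p.1 ≠ p.2 := by
      intro h
      have h0 : dist p.1 p.2 = 0 := by rw [h, dist_self]
      have := hp
      simp only [hK, Set.mem_setOf_eq] at this
      linarith
    obtain ⟨g, hg⟩ := hexp p.1 p.2 hne
    exact Set.mem_iUnion.2 ⟨g, hg⟩
  obtain ⟨F, hF⟩ := hKc.elim_finite_subcover U hUopen hcov
  refine ⟨F, fun y y' h => ?_⟩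
  by_contra hc
  push_neg at hc
  have hmem : (y, y') ∈ K := hc
  obtain ⟨g, hg, hg'⟩ := Set.mem_iUnion₂.1 (hF hmem)
  exact absurd (h g hg) (not_le.2 hg')

/-- Walters' stability theorem for group actions: an expansive action with POTP is
topologically stable; moreover for `3ε < η` (an expansive constant) there is `δ > 0` such
that any action `S` with `d_A(T,S) < δ` admits a unique continuous conjugating map `f`
with `T_g ∘ f = f ∘ S_g` and `d(f, Id) ≤ ε`. -/
theorem expansive_potp_implies_topStable
    {G X : Type*} [Group G] [MetricSpace X] [CompactSpace X]
    (A : Finset G) (hAgen : Subgroup.closure (A : Set G) = ⊤)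
    (T : G → X → X) (hT : IsContAction T)
    (η : ℝ) (hexp : ExpansiveWith T η)
    (hpotp : POTPWrt T (A : Set G)) :
    TopStableWrt T (A : Set G) ∧
    ∀ ε : ℝ, 0 < ε → 3 * ε < η → ∃ δ > (0 : ℝ), ∀ S : G → X → X, IsContAction S →
      (∀ a ∈ A, ∀ x : X, dist (T a x) (S a x) < δ) →
      ∃! f : X → X, Continuous f ∧ (∀ g x, T g (f x) = f (S g x)) ∧
        ∀ x, dist (f x) x ≤ ε := by
  have key : ∀ ε : ℝ, 0 < ε → 3 * ε < η → ∃ δ > (0 : ℝ), ∀ S : G → X → X, IsContAction S →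
      (∀ a ∈ A, ∀ x : X, dist (T a x) (S a x) < δ) →
      ∃! f : X → X, Continuous f ∧ (∀ g x, T g (f x) = f (S g x)) ∧
        ∀ x, dist (f x) x ≤ ε := by
    intro ε hε h3ε
    obtain ⟨δ, hδ, hδtrace⟩ := hpotp ε hε
    refine ⟨δ, hδ, ?_⟩
    intro S hS hdist
    -- uniqueness of the tracing point
    have huniq : ∀ (z : G → X) (y y' : X), (∀ g, dist (T g y) (z g) ≤ ε) →
        (∀ g, dist (T g y') (z g) ≤ ε) → y = y' := by
      intro z y y' h1 h2
      by_contra hne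
      obtain ⟨g, hg⟩ := hexp.2 y y' hne
      have htri : dist (T g y) (T g y') ≤ dist (T g y) (z g) + dist (z g) (T g y') :=
        dist_triangle _ _ _
      have h2' : dist (z g) (T g y') ≤ ε := by rw [dist_comm]; exact h2 g
      have := h1 g
      linarith
    -- each point's S-orbit is a δ-pseudo-orbit of T
    have htrace : ∀ x : X, ∃ y, Traces T ε (fun g => S g x) y := by
      intro x
      apply hδtrace
      intro a ha g
      have hcoe : a ∈ A := ha
      show dist (T a (S g x)) (S (a * g) x) < δ
      rw [hS.2.2 a g x]
      exact hdist a hcoe (S g x)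
    choose f hf using htrace
    have hequiv : ∀ (g : G) (x : X), T g (f x) = f (S g x) := by
      intro g x
      refine huniq (fun h => S h (S g x)) _ _ ?_ ?_
      · intro h
        show dist (T h (T g (f x))) (S h (S g x)) ≤ ε
        rw [← hT.2.2 h g (f x), ← hS.2.2 h g x]
        exact (hf x (h * g)).le
      · intro h
        exact (hf (S g x) h).le
    have hbound : ∀ x : X, dist (f x) x ≤ ε := by
      intro x
      have h1 : dist (T 1 (f x)) (S 1 x) ≤ ε := (hf x 1).le
      rwa [hT.2.1, hS.2.1] at h1
    have hcf : Continuous f := by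
      rw [Metric.continuous_iff]
      intro x ρ hρ
      obtain ⟨F, hF⟩ := uniform_expansive_aux T hT.1 η hexp.2 ρ hρ
      have hc : (0:ℝ) < η - 2 * ε := by linarith
      have hmod : ∀ g : G, ∃ β > (0:ℝ), ∀ x', dist x' x < β →
          dist (S g x') (S g x) < η - 2 * ε := by
        intro g
        exact Metric.continuous_iff.mp (hS.1 g) x _ hc
      choose β hβpos hβ using hmod
      classical
      set F' : Finset G := insert (1 : G) F with hF'
      have hne : F'.Nonempty := ⟨1, Finset.mem_insert_self _ _⟩
      refine ⟨F'.inf' hne β, ?_, ?_⟩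
      · rw [gt_iff_lt, Finset.lt_inf'_iff]
        intro g _
        exact hβpos g
      · intro x' hx'
        apply hF
        intro g hg
        have hle : F'.inf' hne β ≤ β g := Finset.inf'_le _ (Finset.mem_insert_of_mem hg)
        have h1 := hβ g x' (lt_of_lt_of_le hx' hle)
        have h2 := hf x' g
        have h3 := hf x g
        have htri : dist (T g (f x')) (T g (f x)) ≤
            dist (T g (f x')) (S g x') + dist (S g x') (S g x) + dist (S g x) (T g (f x)) :=
          dist_triangle4 _ _ _ _
        have h3' : dist (S g x) (T g (f x)) < ε := by rw [dist_comm]; exact h3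
        linarith
    refine ⟨f, ⟨hcf, hequiv, hbound⟩, ?_⟩
    rintro f' ⟨hcf', hequiv', hbound'⟩
    funext x
    refine huniq (fun g => S g x) _ _ ?_ fun g => (hf x g).le
    intro g
    rw [hequiv' g x]
    exact hbound' (S g x)
  constructor
  · intro ε hε
    set ε' := min ε (η / 4) with hε'def
    have hη := hexp.1
    have hε' : 0 < ε' := lt_min hε (by linarith)
    have h3 : 3 * ε' < η := by
      have h1 : ε' ≤ η / 4 := min_le_right _ _
      linarith
    obtain ⟨δ, hδ, h⟩ := key ε' hε' h3
    refine ⟨δ, hδ, fun S hS hd => ?_⟩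
    obtain ⟨f, ⟨hc, heq, hb⟩, -⟩ := h S hS hd
    exact ⟨f, hc, heq, fun x => (hb x).trans (min_le_left _ _)⟩
  · exact key
end

section
/- Let T be an expansive action with POTP of a finitely generated group G on a compact metric space X with expansive constant η, let ε < η/3, and let f be the conjugating map obtained from topological stability for a nearby action S (so T_g f = f S_g and d(f,Id_X) ≤ ε). If S is also expansive with expansive constant η_S ≥ 2ε, then f is injective. -/
/-- If moreover the nearby action `S` is expansive with expansive constant `η_S ≥ 2ε`, then
the conjugating map `f` (satisfying `d(T_g f(x), S_g x) < ε` for all `g, x`) is injective. -/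
theorem conjugating_map_injective
    {G X : Type*} [Group G] [MetricSpace X] [CompactSpace X]
    (T S : G → X → X) (hT : IsContAction T) (hS : IsContAction S)
    (η : ℝ) (hexp : ExpansiveWith T η)
    (ε : ℝ) (hε : 0 < ε) (hεη : ε < η / 3)
    (f : X → X)
    (hftrace : ∀ g : G, ∀ x : X, dist (T g (f x)) (S g x) < ε)
    (hconj : ∀ g : G, ∀ x : X, T g (f x) = f (S g x))
    (ηS : ℝ) (hSexp : ExpansiveWith S ηS) (hηS : 2 * ε ≤ ηS) :
    Function.Injective f := by
  intro x y hxy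
  by_contra hne
  obtain ⟨g, hg⟩ := hSexp.2 x y hne
  have h1 := hftrace g x
  have h2 := hftrace g y
  have : dist (S g x) (S g y) ≤ dist (S g x) (T g (f x)) + dist (T g (f y)) (S g y) := by
    rw [hxy]; exact dist_triangle _ _ _
  rw [dist_comm (S g x) (T g (f x))] at this
  linarith
end

section
/- Let G be a finitely generated group and H a finitely generated normal subgroup of G. Let T be a continuous action of G on a compact metric space X. If the restriction of T to H is expansive and has the pseudo-orbit tracing property, then T has the pseudo-orbit tracing property. -/
/-!
Let `x` be a fine `A`-pseudo-orbit of `G`. Each `b ∈ B` is a word in `A`, and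
uniform continuity propagates the errors along the word, so for every `g` the coset orbit
`h ↦ x (h g)` is a `B`-pseudo-orbit of `T_H` and is traced by some point `y g`. For `a ∈ A`,
normality of `H` shows that `T a (y g)` traces the coset orbit of `a g` up to `c`, as `y (a g)`
does, so expansiveness forces `T a (y g) = y (a g)`. Hence `y g = T g (y 1)`, and `y 1`
traces `x`.
-/

open Filter Topology

lemma Continuous.eventually_dist_apply_lt {X Y : Type*} [MetricSpace X] [CompactSpace X]
    [MetricSpace Y] {f : X → Y} (hf : Continuous f) {η : ℝ} (hη : 0 < η) :
    ∀ᶠ γ in 𝓝[>] (0 : ℝ), ∀ u v, dist u v < γ → dist (f u) (f v) < η := by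
  obtain ⟨γ, hγ, hf⟩ := Metric.uniformContinuous_iff.mp
    (CompactSpace.uniformContinuous_of_continuous hf) η hη
  filter_upwards [nhdsWithin_le_nhds (eventually_le_nhds hγ)] with δ hδ u v huv
  exact hf (huv.trans_le hδ)

lemma exists_pos_of_eventually_nhdsGT {p : ℝ → Prop}
    (h : ∀ᶠ δ in 𝓝[>] (0 : ℝ), p δ) : ∃ δ > 0, p δ :=
  (h.and self_mem_nhdsWithin).exists.imp fun _ hδ => ⟨hδ.2, hδ.1⟩

namespace IsContAction

variable {G X : Type*} [Group G] {T : G → X → X}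

lemma inv_apply_apply [TopologicalSpace X] (hT : IsContAction T) (g : G) (x : X) :
    T g⁻¹ (T g x) = x := by
  rw [← hT.2.2, inv_mul_cancel, hT.2.1]

lemma apply_eq_of_forall_mem_generators [TopologicalSpace X] (hT : IsContAction T)
    {A : Set G} (hA : Subgroup.closure A = ⊤) {y : G → X}
    (hy : ∀ a ∈ A, ∀ k, T a (y k) = y (a * k)) (g k : G) : T g (y k) = y (g * k) := by
  have hg : g ∈ Subgroup.closure A := hA ▸ Subgroup.mem_top g
  induction hg using Subgroup.closure_induction generalizing k with
  | mem a ha => exact hy a ha k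
  | one => rw [hT.2.1, one_mul]
  | mul g₁ g₂ _ _ ih₁ ih₂ => rw [hT.2.2, ih₂, ih₁, mul_assoc]
  | inv g _ ih => rw [← hT.inv_apply_apply g (y (g⁻¹ * k)), ih, mul_inv_cancel_left]

variable [MetricSpace X]

lemma apply_eq_of_forall_dist_lt (hT : IsContAction T) {H : Subgroup G} (hN : H.Normal)
    {c e : ℝ} (hexp : ExpansiveWith (fun (h : H) (x : X) => T (h : G) x) c)
    (hec : e ≤ c / 3)
    {x y : G → X} (hy : ∀ g, ∀ h : H, dist (T h (y g)) (x (h * g)) < e)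
    {a : G} (hxa : ∀ k, dist (T a (x k)) (x (a * k)) < c / 3)
    (hTa : ∀ u v, dist u v < e → dist (T a u) (T a v) < c / 3) (g : G) :
    T a (y g) = y (a * g) := by
  by_contra hne
  obtain ⟨h, hh⟩ := hexp.2 _ _ hne
  let h' : H := ⟨a⁻¹ * h * a, hN.conj_mem' h h.2 a⟩
  have hconj : T h (T a (y g)) = T a (T h' (y g)) := by
    simp only [h', ← hT.2.2, mul_assoc, mul_inv_cancel_left]
  have hmul : a * (h' * g) = h * (a * g) := by
    simp only [h', mul_assoc, mul_inv_cancel_left]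
  have : dist (T h (T a (y g))) (T h (y (a * g))) < c := calc
    _ ≤ dist (T a (T h' (y g))) (T a (x (h' * g))) + dist (T a (x (h' * g))) (x (h * (a * g)))
          + dist (x (h * (a * g))) (T h (y (a * g))) := by
        rw [hconj]; exact dist_triangle4 _ _ _ _
    _ < c / 3 + c / 3 + c / 3 := by
        rw [dist_comm (x _)]
        gcongr
        · exact hTa _ _ (hy g h')
        · exact hmul ▸ hxa _
        · exact (hy (a * g) h).trans_le hec
    _ = c := by ring
  exact hh.not_gt this

variable [CompactSpace X]

lemma eventually_isPseudoOrbit_dist_lt (hT : IsContAction T) {A : Set G} {g : G}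
    (hg : g ∈ Subgroup.closure A) {η : ℝ} (hη : 0 < η) :
    ∀ᶠ δ in 𝓝[>] (0 : ℝ), ∀ x, IsPseudoOrbit T A δ x →
      ∀ k, dist (T g (x k)) (x (g * k)) < η := by
  induction hg using Subgroup.closure_induction generalizing η with
  | mem a ha =>
    filter_upwards [nhdsWithin_le_nhds (eventually_le_nhds hη)] with δ hδ x hx k
    exact (hx a ha k).trans_le hδ
  | one => exact Eventually.of_forall fun δ x _ k => by simpa [hT.2.1] using hη
  | mul g₁ g₂ _ _ ih₁ ih₂ =>
    obtain ⟨γ, hγ, hg₁⟩ := exists_pos_of_eventually_nhdsGT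
      ((hT.1 g₁).eventually_dist_apply_lt (half_pos hη))
    filter_upwards [ih₁ (half_pos hη), ih₂ hγ] with δ h₁ h₂ x hx k
    calc dist (T (g₁ * g₂) (x k)) (x (g₁ * g₂ * k))
        ≤ dist (T g₁ (T g₂ (x k))) (T g₁ (x (g₂ * k)))
          + dist (T g₁ (x (g₂ * k))) (x (g₁ * (g₂ * k))) := by
          rw [hT.2.2, mul_assoc]; exact dist_triangle _ _ _
      _ < η / 2 + η / 2 := add_lt_add (hg₁ _ _ (h₂ x hx k)) (h₁ x hx _)
      _ = η := add_halves η
  | inv g _ ih =>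
    obtain ⟨γ, hγ, hg⟩ := exists_pos_of_eventually_nhdsGT
      ((hT.1 g⁻¹).eventually_dist_apply_lt hη)
    filter_upwards [ih hγ] with δ h x hx k
    have := hg _ _ (h x hx (g⁻¹ * k))
    rwa [hT.inv_apply_apply, mul_inv_cancel_left, dist_comm] at this

end IsContAction

theorem potp_of_normal_subgroup_expansive_potp_general
    {G X : Type*} [Group G] [MetricSpace X] [CompactSpace X]
    (H : Subgroup G) (hN : H.Normal)
    (A : Finset G) (hAgen : Subgroup.closure (A : Set G) = ⊤)
    (B : Finset H)
    (T : G → X → X) (hT : IsContAction T)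
    (c : ℝ) (hexp : ExpansiveWith (fun (h : H) (x : X) => T (h : G) x) c)
    (hpotp : POTPWrt (fun (h : H) (x : X) => T (h : G) x) (B : Set H)) :
    POTPWrt T (A : Set G) := by
  intro ε hε
  have hc : 0 < c / 3 := by linarith [hexp.1]
  have hmem (g : G) : g ∈ Subgroup.closure (A : Set G) := hAgen ▸ Subgroup.mem_top g
  obtain ⟨e, he, heε, hec, hTa⟩ := exists_pos_of_eventually_nhdsGT <|
    ((eventually_le_nhds hε).filter_mono nhdsWithin_le_nhds).and <|
    ((eventually_le_nhds hc).filter_mono nhdsWithin_le_nhds).and <|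
    (eventually_all_finset A).2 fun a _ => (hT.1 a).eventually_dist_apply_lt hc
  obtain ⟨δH, hδH, htrace⟩ := hpotp e he
  obtain ⟨δ, hδ, hB, hA⟩ := exists_pos_of_eventually_nhdsGT <|
    ((eventually_all_finset B).2 fun b _ => hT.eventually_isPseudoOrbit_dist_lt (hmem b) hδH).and
    ((eventually_all_finset A).2 fun a _ => hT.eventually_isPseudoOrbit_dist_lt (hmem a) hc)
  refine ⟨δ, hδ, fun x hx => ?_⟩
  have hcoset (g : G) : ∃ y, ∀ h : H, dist (T h y) (x (h * g)) < e :=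
    htrace (fun h => x (h * g)) fun b hb h => by
      simpa only [Subgroup.coe_mul, mul_assoc] using hB b hb x hx (h * g)
  choose y hy using hcoset
  have hequiv := hT.apply_eq_of_forall_mem_generators hAgen fun a ha =>
    hT.apply_eq_of_forall_dist_lt hN hexp hec hy (hA a ha x hx) (hTa a ha)
  refine ⟨y 1, fun g => ?_⟩
  simpa only [hequiv, mul_one, OneMemClass.coe_one, hT.2.1, one_mul] using (hy g 1).trans_le heε

/-- If the restriction of `T` to a finitely generated normal subgroup `H` is expansive and
has POTP, then `T` has POTP. -/
theorem potp_of_normal_subgroup_expansive_potp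
    {G X : Type*} [Group G] [MetricSpace X] [CompactSpace X]
    (H : Subgroup G) (hN : H.Normal)
    (A : Finset G) (hAgen : Subgroup.closure (A : Set G) = ⊤)
    (B : Finset H) (hBgen : Subgroup.closure (B : Set H) = ⊤)
    (T : G → X → X) (hT : IsContAction T)
    (c : ℝ) (hexp : ExpansiveWith (fun (h : H) (x : X) => T (h : G) x) c)
    (hpotp : POTPWrt (fun (h : H) (x : X) => T (h : G) x) (B : Set H)) :
    POTPWrt T (A : Set G) :=
  potp_of_normal_subgroup_expansive_potp_general H hN A hAgen B T hT c hexp hpotp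
end

section
/- Let G be a finitely generated nilpotent group and T a continuous action of G on a compact metric space X. If there exists g ∈ G such that the homeomorphism T_g is expansive and has the pseudo-orbit tracing property (as a Z-action), then the G-action T has the pseudo-orbit tracing property. -/
/-- The homeomorphism `T_g` is expansive (as a `ℤ`-action) with expansive constant `c`. -/
def ZExpansiveWith {G X : Type*} [Group G] [MetricSpace X] (T : G → X → X) (g : G)
    (c : ℝ) : Prop :=
  0 < c ∧ ∀ x y : X, x ≠ y → ∃ n : ℤ, dist (T (g ^ n) x) (T (g ^ n) y) > c

/-- The homeomorphism `T_g` has the classical pseudo-orbit tracing property (as a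
`ℤ`-action). -/
def ZPOTP {G X : Type*} [Group G] [MetricSpace X] (T : G → X → X) (g : G) : Prop :=
  ∀ ε > (0 : ℝ), ∃ δ > (0 : ℝ), ∀ x : ℤ → X, (∀ n : ℤ, dist (T g (x n)) (x (n + 1)) < δ) →
    ∃ y : X, ∀ n : ℤ, dist (T (g ^ n) y) (x n) < ε

/-!
Let `c` be an expansive constant of `T_g` and `ξ` a pseudo-orbit. POTP of `T_g` gives, for every
`h`, a point `Y h` whose `T_g`-orbit `c/2`-shadows `n ↦ ξ (g ^ n * h)`, and by expansiveness such
a shadow is unique. Hence the `u` with `T u ∘ Y = Y ∘ (u * ·)` form a subgroup `K` containing `g`,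
and uniqueness again puts into `K` every `b` with `b⁻¹ ⟨g⟩ b ≤ K` along which `ξ` is a fine enough
pseudo-orbit. In a finitely generated nilpotent group finitely many such `b`, the iterated
commutators of the generators, already force `K = G`: descend the lower central series using
`b⁻¹ h b = h ⁅b⁻¹, h⁻¹⁆⁻¹`. So `Y` is equivariant, and `Y 1` traces `ξ`.
-/

open Subgroup Filter Topology commutatorElement

section IteratedCommutators

variable {G : Type*} [Group G]

def iteratedCommutators (A : Set G) : ℕ → Set G
  | 0 => A
  | j + 1 => Set.image2 (fun w a => ⁅w, a⁆) (iteratedCommutators A j) A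

theorem iteratedCommutators_finite {A : Set G} (hA : A.Finite) (j : ℕ) :
    (iteratedCommutators A j).Finite := by
  induction j with
  | zero => rwa [iteratedCommutators]
  | succ j ih => rw [iteratedCommutators]; exact ih.image2 _ hA

theorem iteratedCommutators_subset_lowerCentralSeries (A : Set G) (j : ℕ) :
    iteratedCommutators A j ⊆ (⊤ : Subgroup G).lowerCentralSeries j := by
  induction j with
  | zero => exact fun w _ => mem_top w
  | succ j ih =>
    rintro _ ⟨w, hw, a, -, rfl⟩
    exact commutator_mem_commutator (ih hw) (mem_top a)

theorem commutator_normalClosure_top_le {A S : Set G} (hA : closure A = ⊤) {N : Subgroup G}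
    [N.Normal] (h : ∀ s ∈ S, ∀ a ∈ A, ⁅s, a⁆ ∈ N) : ⁅normalClosure S, ⊤⁆ ≤ N := by
  have : (Subgroup.upperCentralSeriesStep N).Normal := by
    rw [Subgroup.upperCentralSeriesStep_eq_comap_center]; infer_instance
  suffices hS : S ⊆ Subgroup.upperCentralSeriesStep N from
    commutator_le.2 fun x hx y _ => normalClosure_le_normal hS hx y
  intro s hs y
  induction (hA ▸ mem_top y : y ∈ closure A) using closure_induction with
  | mem a ha => exact h s hs a ha
  | one => rw [commutatorElement_one_right]; exact one_mem N
  | mul y z _ _ hy hz =>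
    rw [commutatorElement_mul_right_eq_mul_conj, mul_assoc _ y, mul_assoc]
    exact mul_mem hy (‹N.Normal›.conj_mem _ hz y)
  | inv y _ hy =>
    rw [commutatorElement_inv_right, ← commutatorElement_inv]
    exact ‹N.Normal›.conj_mem' _ (inv_mem hy) y

theorem lowerCentralSeries_le_normalClosure_iteratedCommutators {A : Set G}
    (hA : closure A = ⊤) (j : ℕ) :
    (⊤ : Subgroup G).lowerCentralSeries j ≤ normalClosure (iteratedCommutators A j) := by
  induction j with
  | zero => exact hA ▸ closure_le_normalClosure
  | succ j ih =>
    refine (commutator_mono ih le_rfl).trans (commutator_normalClosure_top_le hA ?_)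
    exact fun w hw a ha => subset_normalClosure ⟨w, hw, a, ha, rfl⟩

theorem lowerCentralSeries_le_of_succ_le {A : Set G} (hA : closure A = ⊤) {H K : Subgroup G}
    (hHK : H ≤ K) {j : ℕ} (hsucc : (⊤ : Subgroup G).lowerCentralSeries (j + 1) ≤ K)
    (hK : ∀ b ∈ iteratedCommutators A j, (∀ h ∈ H, b⁻¹ * h * b ∈ K) → b ∈ K) :
    (⊤ : Subgroup G).lowerCentralSeries j ≤ K := by
  have hcomm : ∀ w ∈ (⊤ : Subgroup G).lowerCentralSeries j, ∀ x, ⁅w, x⁆ ∈ K :=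
    fun w hw x => hsucc (commutator_mem_commutator hw (mem_top x))
  have hγ := iteratedCommutators_subset_lowerCentralSeries A j
  have hWK : iteratedCommutators A j ⊆ K := fun b hb => hK b hb fun h hh => by
    rw [show b⁻¹ * h * b = h * ⁅b⁻¹, h⁻¹⁆⁻¹ by group]
    exact mul_mem (hHK hh) (inv_mem (hcomm _ (inv_mem (hγ hb)) _))
  refine (lowerCentralSeries_le_normalClosure_iteratedCommutators hA j).trans ((closure_le _).2 ?_)
  intro x hx
  obtain ⟨w, hw, hconj⟩ := Group.mem_conjugatesOfSet_iff.1 hx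
  obtain ⟨c, rfl⟩ := isConj_iff.1 hconj
  rw [show c * w * c⁻¹ = ⁅w, c⁆⁻¹ * w by group]
  exact mul_mem (inv_mem (hcomm w (hγ hw) c)) (hWK hw)

theorem exists_finset_forall_eq_top_of_conj_mem [Group.FG G] [Group.IsNilpotent G] :
    ∃ B : Finset G, ∀ H K : Subgroup G, H ≤ K →
      (∀ b ∈ B, (∀ h ∈ H, b⁻¹ * h * b ∈ K) → b ∈ K) → K = ⊤ := by
  obtain ⟨A, hA, hAfin⟩ := Group.fg_iff.1 ‹Group.FG G›
  obtain ⟨k, hk⟩ := Subgroup.nilpotent_iff_lowerCentralSeries.1 ‹Group.IsNilpotent G›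
  have hfin : (⋃ j ∈ Finset.range k, iteratedCommutators A j).Finite :=
    (Finset.range k).finite_toSet.biUnion fun j _ => iteratedCommutators_finite hAfin j
  refine ⟨hfin.toFinset, fun H K hHK hK => top_le_iff.1 ?_⟩
  refine Nat.decreasingInduction (motive := fun j _ => (⊤ : Subgroup G).lowerCentralSeries j ≤ K)
    (fun j hj hsucc => lowerCentralSeries_le_of_succ_le hA hHK hsucc fun b hb => hK b ?_)
    (hk ▸ bot_le) (Nat.zero_le k)
  rw [Set.Finite.mem_toFinset, Set.mem_iUnion₂]
  exact ⟨j, Finset.mem_coe.2 (Finset.mem_range.2 hj), hb⟩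

end IteratedCommutators

section Dynamics

variable {G X : Type*} [Group G]

def equivarianceSubgroup [TopologicalSpace X] {T : G → X → X} (hT : IsContAction T)
    (Y : G → X) : Subgroup G where
  carrier := {u | ∀ h, T u (Y h) = Y (u * h)}
  one_mem' h := by rw [hT.2.1, one_mul]
  mul_mem' {a b} ha hb h := by rw [hT.2.2, hb, ha, mul_assoc]
  inv_mem' {a} ha h := by
    conv_lhs => rw [← mul_inv_cancel_left a h, ← ha, ← hT.2.2, inv_mul_cancel, hT.2.1]

variable [MetricSpace X] {T : G → X → X}

theorem IsPseudoOrbit.mono {A B : Set G} {δ δ' : ℝ} {ξ : G → X} (h : IsPseudoOrbit T A δ ξ)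
    (hBA : B ⊆ A) (hδ : δ ≤ δ') : IsPseudoOrbit T B δ' ξ :=
  fun a ha k => (h a (hBA ha) k).trans_le hδ

theorem eventually_dist_lt_of_isPseudoOrbit [CompactSpace X] {A : Set G} (hA : closure A = ⊤)
    (hT : IsContAction T) (f : G) : ∀ θ > (0 : ℝ), ∀ᶠ δ in 𝓝[>] 0,
      ∀ ξ : G → X, IsPseudoOrbit T A δ ξ → ∀ k, dist (T f (ξ k)) (ξ (f * k)) < θ := by
  have hunif (x : G) := Metric.uniformContinuous_iff.1
    (CompactSpace.uniformContinuous_of_continuous (hT.1 x))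
  induction (hA ▸ mem_top f : f ∈ closure A) using closure_induction with
  | mem a ha =>
    intro θ hθ
    filter_upwards [Ioo_mem_nhdsGT hθ] with δ hδ ξ hξ k using (hξ a ha k).trans hδ.2
  | one => exact fun θ hθ => Eventually.of_forall fun _ ξ _ k => by simpa [hT.2.1] using hθ
  | mul x y _ _ hx hy =>
    intro θ hθ
    obtain ⟨η, hη, hxη⟩ := hunif x (θ / 2) (half_pos hθ)
    filter_upwards [hx (θ / 2) (half_pos hθ), hy η hη] with δ hxδ hyδ ξ hξ k
    calc dist (T (x * y) (ξ k)) (ξ (x * y * k))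
        ≤ dist (T x (T y (ξ k))) (T x (ξ (y * k))) + dist (T x (ξ (y * k))) (ξ (x * (y * k))) := by
          rw [hT.2.2, mul_assoc]; exact dist_triangle _ _ _
      _ < θ / 2 + θ / 2 := add_lt_add (hxη (hyδ ξ hξ k)) (hxδ ξ hξ (y * k))
      _ = θ := add_halves θ
  | inv x _ hx =>
    intro θ hθ
    obtain ⟨η, hη, hxη⟩ := hunif x⁻¹ θ hθ
    filter_upwards [hx η hη] with δ hxδ ξ hξ k
    have := hxη (hxδ ξ hξ (x⁻¹ * k))
    rwa [← hT.2.2, inv_mul_cancel, hT.2.1, mul_inv_cancel_left, dist_comm] at this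

theorem exists_isPseudoOrbit_of_isPseudoOrbit [CompactSpace X] {A : Set G}
    (hA : closure A = ⊤) (hT : IsContAction T) (F : Finset G) {θ : ℝ} (hθ : 0 < θ) :
    ∃ δ > 0, ∀ ξ : G → X, IsPseudoOrbit T A δ ξ → IsPseudoOrbit T F θ ξ := by
  obtain ⟨δ, hδF, hδ⟩ := (((eventually_all_finset F).2 fun f _ =>
    eventually_dist_lt_of_isPseudoOrbit hA hT f θ hθ).and self_mem_nhdsWithin).exists
  exact ⟨δ, hδ, fun ξ hξ f hf k => hδF f hf ξ hξ k⟩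

variable {g : G} {c : ℝ}

theorem ZExpansiveWith.eq_of_forall_dist_le (hexp : ZExpansiveWith T g c) {u v : X}
    (z : ℤ → X) (hu : ∀ n : ℤ, dist (T (g ^ n) u) (z n) ≤ c / 2)
    (hv : ∀ n : ℤ, dist (T (g ^ n) v) (z n) ≤ c / 2) : u = v := by
  by_contra hne
  obtain ⟨n, hn⟩ := hexp.2 u v hne
  linarith [hu n, hv n, dist_triangle_right (T (g ^ n) u) (T (g ^ n) v) (z n)]

theorem ZPOTP.exists_shadow (hpotp : ZPOTP T g) {ε : ℝ} (hε : 0 < ε) :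
    ∃ δ > 0, ∀ ξ : G → X, IsPseudoOrbit T {g} δ ξ →
      ∃ Y : G → X, ∀ h (n : ℤ), dist (T (g ^ n) (Y h)) (ξ (g ^ n * h)) < ε := by
  obtain ⟨δ, hδ, htrace⟩ := hpotp ε hε
  refine ⟨δ, hδ, fun ξ hξ => ?_⟩
  choose Y hY using fun h => htrace (fun n => ξ (g ^ n * h)) fun n => by
    rw [show g ^ (n + 1) * h = g * (g ^ n * h) by group]
    exact hξ g rfl _
  exact ⟨Y, hY⟩

variable {Y ξ : G → X}

theorem self_mem_equivarianceSubgroup (hT : IsContAction T) (hexp : ZExpansiveWith T g c)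
    (hY : ∀ h (n : ℤ), dist (T (g ^ n) (Y h)) (ξ (g ^ n * h)) ≤ c / 2) :
    g ∈ equivarianceSubgroup hT Y := fun h =>
  hexp.eq_of_forall_dist_le (fun n => ξ (g ^ (n + 1) * h))
    (fun n => by rw [← hT.2.2, ← zpow_add_one]; exact hY h (n + 1))
    (fun n => by rw [zpow_add_one, mul_assoc]; exact hY (g * h) n)

theorem mem_equivarianceSubgroup_of_forall_conj_mem (hT : IsContAction T)
    (hexp : ZExpansiveWith T g c)
    (hY : ∀ h (n : ℤ), dist (T (g ^ n) (Y h)) (ξ (g ^ n * h)) ≤ c / 2) {b : G}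
    (hYb : ∀ h, dist (T b (Y h)) (T b (ξ h)) < c / 4)
    (hξb : ∀ h, dist (T b (ξ h)) (ξ (b * h)) < c / 4)
    (hconj : ∀ n : ℤ, b⁻¹ * g ^ n * b ∈ equivarianceSubgroup hT Y) :
    b ∈ equivarianceSubgroup hT Y := fun h => by
  refine hexp.eq_of_forall_dist_le (fun n => ξ (g ^ n * (b * h))) (fun n => ?_) (hY (b * h))
  set w := b⁻¹ * g ^ n * b * h
  have hw : T (g ^ n) (T b (Y h)) = T b (Y w) := by
    rw [← hT.2.2, ← hconj n h, ← hT.2.2]; group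
  rw [hw, show g ^ n * (b * h) = b * w by simp only [w]; group]
  linarith [hYb w, hξb w, dist_triangle (T b (Y w)) (T b (ξ w)) (ξ (b * w))]

theorem exists_equivariant_shadow [CompactSpace X] [Group.FG G] [Group.IsNilpotent G]
    (hT : IsContAction T) (hexp : ZExpansiveWith T g c) (hpotp : ZPOTP T g) {ε : ℝ}
    (hε : 0 < ε) : ∃ δ > 0, ∃ F : Finset G, ∀ ξ : G → X, IsPseudoOrbit T F δ ξ →
      ∃ Y : G → X, (∀ h, dist (Y h) (ξ h) < ε) ∧ ∀ u h, T u (Y h) = Y (u * h) := by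
  classical
  have hc := hexp.1
  obtain ⟨B, hB⟩ := exists_finset_forall_eq_top_of_conj_mem (G := G)
  obtain ⟨ρ, hρ, hρB⟩ := Metric.uniformEquicontinuous_iff.1 (uniformEquicontinuous_finite.2
    fun b : B => CompactSpace.uniformContinuous_of_continuous (hT.1 b)) (c / 4) (by positivity)
  obtain ⟨δ, hδ, hshadow⟩ := hpotp.exists_shadow (ε := min ε (min ρ (c / 2))) (by positivity)
  refine ⟨min δ (c / 4), by positivity, insert g B, fun ξ hξ => ?_⟩
  obtain ⟨Y, hY⟩ := hshadow ξ (hξ.mono (by simp) (min_le_left _ _))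
  have hY₀ (h : G) : dist (Y h) (ξ h) < min ε (min ρ (c / 2)) := by
    simpa [hT.2.1] using hY h 0
  have hYc (h : G) (n : ℤ) : dist (T (g ^ n) (Y h)) (ξ (g ^ n * h)) ≤ c / 2 :=
    (hY h n).le.trans ((min_le_right _ _).trans (min_le_right _ _))
  have htop : equivarianceSubgroup hT Y = ⊤ :=
    hB (zpowers g) _ (zpowers_le.2 (self_mem_equivarianceSubgroup hT hexp hYc))
      fun b hb hconj => mem_equivarianceSubgroup_of_forall_conj_mem hT hexp hYc
        (fun h => hρB _ _ ((hY₀ h).trans_le ((min_le_right _ _).trans (min_le_left _ _))) ⟨b, hb⟩)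
        (fun h => (hξ b (by simp [hb]) h).trans_le (min_le_right _ _))
        (fun n => hconj _ (zpow_mem_zpowers g n))
  exact ⟨Y, fun h => (hY₀ h).trans_le (min_le_left _ _),
    fun u => (htop ▸ mem_top u : u ∈ equivarianceSubgroup hT Y)⟩

end Dynamics

/-- If `G` is a finitely generated nilpotent group and some `T_g` is expansive and has POTP,
then the `G`-action `T` has POTP. -/
theorem potp_of_nilpotent_of_element_expansive_potp
    {G X : Type*} [Group G] [Group.IsNilpotent G] [MetricSpace X] [CompactSpace X]
    (A : Finset G) (hAgen : Subgroup.closure (A : Set G) = ⊤)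
    (T : G → X → X) (hT : IsContAction T)
    (g : G) (c : ℝ) (hexp : ZExpansiveWith T g c) (hpotp : ZPOTP T g) :
    POTPWrt T (A : Set G) := by
  have : Group.FG G := Group.fg_iff.2 ⟨A, hAgen, A.finite_toSet⟩
  intro ε hε
  obtain ⟨δ₀, hδ₀, F, hF⟩ := exists_equivariant_shadow hT hexp hpotp hε
  obtain ⟨δ, hδ, hδF⟩ := exists_isPseudoOrbit_of_isPseudoOrbit hAgen hT F hδ₀
  refine ⟨δ, hδ, fun ξ hξ => ?_⟩
  obtain ⟨Y, hYξ, hYeq⟩ := hF ξ (hδF ξ hξ)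
  exact ⟨Y 1, fun u => by simpa only [hYeq, mul_one] using hYξ u⟩
end

section
/- Let G be an infinite, finitely generated group and let T be an equicontinuous action of G on the Cantor space X. Then T has the pseudo-orbit tracing property. -/
/-!
Cut the compact totally disconnected space `X` into finitely many clopen pieces of diameter
`< ε`, and code a point by its itinerary `g ↦ (piece containing T g u)`. Equicontinuity makes
points at distance `< δ` share their itinerary, so along a `δ` pseudo-orbit `x (a * g)` and
`T a (x g)` have the same itinerary for every generator `a`. Itineraries are `G`-equivariant, so
this propagates over the generated group: `x g` and `T g (x 1)` have the same itinerary, in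
particular they lie in the same piece, and `x 1` `ε`-traces the pseudo-orbit.
-/

open Set Uniformity

section Itinerary

variable {G X Y : Type*}

def itinerary (T : G → X → X) (f : X → Y) (u : X) : G → Y := fun g => f (T g u)

lemma itinerary_apply_eq [Mul G] {T : G → X → X} (hmul : ∀ g h x, T (g * h) x = T g (T h x))
    (f : X → Y) (h : G) (u : X) :
    itinerary T f (T h u) = fun g => itinerary T f u (g * h) := by
  funext g
  simp only [itinerary, hmul]

lemma itinerary_apply_congr [Mul G] {T : G → X → X}
    (hmul : ∀ g h x, T (g * h) x = T g (T h x)) {f : X → Y} (h : G) {u v : X}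
    (huv : itinerary T f u = itinerary T f v) :
    itinerary T f (T h u) = itinerary T f (T h v) := by
  rw [itinerary_apply_eq hmul, itinerary_apply_eq hmul, huv]

theorem itinerary_eq_of_closure_eq_top [Group G] {T : G → X → X} (h1 : ∀ x, T 1 x = x)
    (hmul : ∀ g h x, T (g * h) x = T g (T h x)) {f : X → Y} {A : Set G}
    (hA : Subgroup.closure A = ⊤) {x : G → X}
    (hx : ∀ a ∈ A, ∀ g, itinerary T f (T a (x g)) = itinerary T f (x (a * g))) (g : G) :
    itinerary T f (x g) = itinerary T f (T g (x 1)) := by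
  have hg : g ∈ Subgroup.closure A := hA ▸ Subgroup.mem_top g
  induction hg using Subgroup.closure_induction_left with
  | one => rw [h1]
  | mul_left a ha g _ ih =>
    rw [← hx a ha, hmul]
    exact itinerary_apply_congr hmul a ih
  | inv_mul_cancel a ha g _ ih =>
    have key : itinerary T f (T a (x (a⁻¹ * g))) = itinerary T f (T a (T (a⁻¹ * g) (x 1))) := by
      rw [hx a ha, mul_inv_cancel_left, ih, ← hmul, mul_inv_cancel_left]
    have cancel : ∀ z, T a⁻¹ (T a z) = z := fun z => by rw [← hmul, inv_mul_cancel, h1]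
    simpa only [cancel] using itinerary_apply_congr hmul a⁻¹ key

end Itinerary

lemma Continuous.setOf_apply_eq_mem_uniformity {X Y : Type*} [UniformSpace X] [CompactSpace X]
    [TopologicalSpace Y] [DiscreteTopology Y] {f : X → Y} (hf : Continuous f) :
    {p : X × X | f p.1 = f p.2} ∈ 𝓤 X := by
  rw [← nhdsSet_diagonal_eq_uniformity]
  refine IsOpen.mem_nhdsSet ?_ |>.2 fun p (hp : p.1 = p.2) => congrArg f hp
  exact (isOpen_discrete (diagonal Y)).preimage (hf.prodMap hf)

lemma UniformEquicontinuous.eventually_itinerary_eq {G X Y : Type*} [UniformSpace X]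
    [CompactSpace X] [TopologicalSpace Y] [DiscreteTopology Y] {T : G → X → X}
    (hT : UniformEquicontinuous T) {f : X → Y} (hf : Continuous f) :
    ∀ᶠ p in 𝓤 X, itinerary T f p.1 = itinerary T f p.2 :=
  (hT _ hf.setOf_apply_eq_mem_uniformity).mono fun _ hp => funext hp

lemma exists_continuous_fin_dist_lt_of_apply_eq {X : Type*} [MetricSpace X] [CompactSpace X]
    [TotallyDisconnectedSpace X] {ε : ℝ} (hε : 0 < ε) :
    ∃ (n : ℕ) (f : X → Fin n), Continuous f ∧ ∀ u v, f u = f v → dist u v < ε := by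
  obtain ⟨n, f, c, hf, hfc⟩ := (ContinuousMap.id X).exists_finite_approximation_of_mem_nhds_diagonal
    (nhdsSet_diagonal_le_uniformity (Metric.dist_mem_uniformity (half_pos hε)))
  refine ⟨n, f, hf, fun u v huv => ?_⟩
  have hu : dist u (c (f u)) < ε / 2 := hfc u
  have hv : dist v (c (f u)) < ε / 2 := huv ▸ hfc v
  calc dist u v ≤ dist u (c (f u)) + dist v (c (f u)) := dist_triangle_right _ _ _
    _ < ε := by linarith

theorem equicontinuous_action_on_cantor_potp_general
    {G X : Type*} [Group G] [MetricSpace X] [CompactSpace X]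
    [TotallyDisconnectedSpace X]
    (A : Finset G) (hAgen : Subgroup.closure (A : Set G) = ⊤)
    (T : G → X → X) (hT : IsContAction T)
    (hequi : ∀ ε > (0 : ℝ), ∃ δ > (0 : ℝ), ∀ x y : X, dist x y < δ →
      ∀ g : G, dist (T g x) (T g y) < ε) :
    POTPWrt T (A : Set G) := by
  obtain ⟨-, h1, hmul⟩ := hT
  intro ε hε
  obtain ⟨n, f, hf, hf_small⟩ := exists_continuous_fin_dist_lt_of_apply_eq (X := X) hε
  obtain ⟨δ, hδ, hδ_itin⟩ := Metric.mem_uniformity_dist.1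
    ((Metric.uniformEquicontinuous_iff.2 hequi).eventually_itinerary_eq hf)
  refine ⟨δ, hδ, fun x hx => ⟨x 1, fun g => ?_⟩⟩
  have h_itin := itinerary_eq_of_closure_eq_top h1 hmul hAgen
    (fun a ha k => hδ_itin (hx a ha k)) g
  have h_piece : f (x g) = f (T g (x 1)) := by simpa [itinerary, h1] using congrFun h_itin 1
  exact dist_comm (x g) _ ▸ hf_small _ _ h_piece

/-- Every equicontinuous action of an infinite finitely generated group on the Cantor space
has the pseudo-orbit tracing property. -/
theorem equicontinuous_action_on_cantor_potp
    {G X : Type*} [Group G] [Infinite G] [MetricSpace X] [CompactSpace X]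
    [TotallyDisconnectedSpace X] [Nonempty X]
    (hperfect : ∀ x : X, (nhdsWithin x {x}ᶜ).NeBot)
    (A : Finset G) (hAgen : Subgroup.closure (A : Set G) = ⊤)
    (hAsymm : ∀ a ∈ A, a⁻¹ ∈ A)
    (T : G → X → X) (hT : IsContAction T)
    (hequi : ∀ ε > (0 : ℝ), ∃ δ > (0 : ℝ), ∀ x y : X, dist x y < δ →
      ∀ g : G, dist (T g x) (T g y) < ε) :
    POTPWrt T (A : Set G) :=
  equicontinuous_action_on_cantor_potp_general A hAgen T hT hequi
end

section
/- Every distal action of a finitely generated infinite group on the Cantor space has the pseudo-orbit tracing property. -/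
/-!
Fix `ε` and a continuous map `π` from `X` to a finite discrete set whose fibres have diameter
`< ε`; it exists because `X` is compact and totally disconnected. The heart of the proof is that
for a distal action of a finitely generated group the set of pairs `(x, y)` with
`π (T g x) = π (T g y)` for all `g` is open. It then contains a `δ`-neighbourhood of the diagonal,
and this `δ` works: the relation "same `π`-itinerary" is a `G`-invariant equivalence relation, so
along a `δ`-pseudo-orbit `x` it propagates from `g` to `a * g` and `a⁻¹ * g` for generators `a`,
and `x 1` traces `x`.

Openness: otherwise, for every `n` some pair agrees on the ball `S ^ n` of a finite symmetric
generating set but not everywhere. Stopping its orbit at the first disagreement gives a point `P`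
outside the agreement set `U` from which, for every `k`, some `v k` leads into the points that
stay in `U` along `S ^ k`. A limit `Q` of the `T (v k) P` stays in `U` forever and lies in the
orbit closure of `P`. In a distal system orbit closures are symmetric (an idempotent of the
enveloping semigroup is the identity), so `P` lies in the orbit closure of `Q`, which is contained
in the closed invariant set of points staying in `U`: a contradiction since `P ∉ U`.
-/

open Set Filter Topology Pointwise

section Distal

variable {G Z : Type*} [MetricSpace Z]

def IsDistal (T : G → Z → Z) : Prop :=
  ∀ x y : Z, x ≠ y → ∃ c > (0 : ℝ), ∀ g : G, c ≤ dist (T g x) (T g y)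

variable {T : G → Z → Z}

lemma IsDistal.eq_of_forall_exists_dist_lt (hd : IsDistal T) {x y : Z}
    (h : ∀ ε > (0 : ℝ), ∃ g : G, dist (T g x) (T g y) < ε) : x = y := by
  by_contra hxy
  obtain ⟨c, hc, hcT⟩ := hd x y hxy
  obtain ⟨g, hg⟩ := h c hc
  exact (hcT g).not_gt hg

lemma IsDistal.eq_id_of_idempotent_mem_closure_range (hd : IsDistal T) {e : Z → Z}
    (he : e ∈ closure (range T)) (hee : e ∘ e = e) : e = id := by
  funext x
  refine hd.eq_of_forall_exists_dist_lt fun ε hε => ?_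
  have hopen : IsOpen {k : Z → Z | dist (k (e x)) (k x) < ε} :=
    isOpen_lt ((continuous_apply _).dist (continuous_apply _)) continuous_const
  have hee_x : e (e x) = e x := congrFun hee x
  obtain ⟨_, hk, g, rfl⟩ := mem_closure_iff.mp he _ hopen (by simpa [hee_x] using hε)
  exact ⟨g, hk⟩

lemma IsContAction.prodMap [Group G] (hT : IsContAction T) :
    IsContAction fun g : G => Prod.map (T g) (T g) :=
  ⟨fun g => (hT.1 g).prodMap (hT.1 g), fun _ => Prod.ext (hT.2.1 _) (hT.2.1 _),
    fun _ _ _ => Prod.ext (hT.2.2 _ _ _) (hT.2.2 _ _ _)⟩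

lemma IsDistal.prodMap (hd : IsDistal T) : IsDistal fun g : G => Prod.map (T g) (T g) := by
  rintro ⟨x₁, x₂⟩ ⟨y₁, y₂⟩ hxy
  by_cases h₁ : x₁ = y₁
  · obtain ⟨c, hc, hcT⟩ := hd x₂ y₂ fun h₂ => hxy (by rw [h₁, h₂])
    exact ⟨c, hc, fun g => (hcT g).trans (le_max_right _ _)⟩
  · obtain ⟨c, hc, hcT⟩ := hd x₁ y₁ h₁
    exact ⟨c, hc, fun g => (hcT g).trans (le_max_left _ _)⟩

end Distal

section Enveloping

variable {G Z : Type*} [Group G] [MetricSpace Z] {T : G → Z → Z}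

lemma IsContAction.comp_mem_closure_range (hT : IsContAction T) {f k : Z → Z}
    (hf : f ∈ closure (range T)) (hk : k ∈ closure (range T)) : f ∘ k ∈ closure (range T) := by
  have hleft : ∀ g, ∀ k ∈ closure (range T), T g ∘ k ∈ closure (range T) := by
    intro g k hk
    rw [← closure_closure (s := range T)]
    refine map_mem_closure (f := fun k => T g ∘ k)
      (continuous_pi fun z => (hT.1 g).comp (continuous_apply z)) hk ?_
    rintro _ ⟨g', rfl⟩
    exact subset_closure ⟨g * g', funext (hT.2.2 g g')⟩
  rw [← closure_closure (s := range T)]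
  refine map_mem_closure (f := fun f => f ∘ k) (continuous_pi fun z => continuous_apply (k z)) hf ?_
  rintro _ ⟨g, rfl⟩
  exact hleft g k hk

theorem IsDistal.mem_closure_range_of_mem_closure_range [CompactSpace Z] (hT : IsContAction T)
    (hd : IsDistal T) {z w : Z} (hw : w ∈ closure (range fun g => T g z)) :
    z ∈ closure (range fun g => T g w) := by
  set E := closure (range T)
  have hE : IsCompact E := isClosed_closure.isCompact
  obtain ⟨f, hf, rfl⟩ : w ∈ (fun f : Z → Z => f z) '' E := by
    refine closure_minimal ?_ (hE.image (continuous_apply z)).isClosed hw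
    rintro _ ⟨g, rfl⟩
    exact ⟨T g, subset_closure ⟨g, rfl⟩, rfl⟩
  -- `k ∘ f` is an idempotent of the compact semigroup `E ∘ f`, so it is the identity.
  let : TopologicalSpace (Function.End Z) := inferInstanceAs (TopologicalSpace (Z → Z))
  have : T2Space (Function.End Z) := inferInstanceAs (T2Space (Z → Z))
  obtain ⟨_, ⟨k, hk, rfl⟩, hidem⟩ := exists_idempotent_in_compact_subsemigroup (M := Function.End Z)
    (fun r => continuous_pi fun z => continuous_apply (r z))
    ((fun k : Z → Z => k ∘ f) '' E) ⟨_, ⟨T 1, subset_closure ⟨1, rfl⟩, rfl⟩⟩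
    (hE.image (continuous_pi fun z => continuous_apply (f z)))
    (by
      rintro _ ⟨a, ha, rfl⟩ _ ⟨b, hb, rfl⟩
      exact ⟨(a ∘ f) ∘ b, hT.comp_mem_closure_range (hT.comp_mem_closure_range ha hf) hb, rfl⟩)
  have hkf : k ∘ f = id :=
    hd.eq_id_of_idempotent_mem_closure_range (hT.comp_mem_closure_range hk hf) hidem
  have hkfz : k (f z) = z := congrFun hkf z
  have hkw := map_mem_closure (f := fun k : Z → Z => k (f z)) (continuous_apply (f z)) hk
    (t := range fun g => T g (f z)) (by rintro _ ⟨g, rfl⟩; exact ⟨g, rfl⟩)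
  rwa [hkfz] at hkw

end Enveloping

lemma Set.Finite.pow {M : Type*} [Monoid M] {s : Set M} (hs : s.Finite) : ∀ n : ℕ, (s ^ n).Finite
  | 0 => by simp
  | n + 1 => by rw [pow_succ]; exact (hs.pow n).mul hs

lemma Group.FG.exists_finite_symmetric_pow_cover (G : Type*) [Group G] [Group.FG G] :
    ∃ S : Set G, S.Finite ∧ 1 ∈ S ∧ S⁻¹ = S ∧ ∀ g : G, ∃ n, g ∈ S ^ n := by
  obtain ⟨A, hA⟩ := Group.FG.out (G := G)
  refine ⟨insert 1 ((A : Set G) ∪ (A : Set G)⁻¹),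
    (A.finite_toSet.union A.finite_toSet.inv).insert 1, mem_insert _ _,
    by simp [Set.union_comm], fun g => ?_⟩
  refine Subgroup.closure_induction_left (p := fun g _ => ∃ n, g ∈ _ ^ n) ⟨0, by simp⟩
    (fun a ha g _ ⟨n, hn⟩ => ⟨n + 1, pow_succ' (M := Set G) _ n ▸ mul_mem_mul (by simp [ha]) hn⟩)
    (fun a ha g _ ⟨n, hn⟩ => ⟨n + 1, pow_succ' (M := Set G) _ n ▸ mul_mem_mul (by simp [ha]) hn⟩)
    (hA ▸ Subgroup.mem_top g)

lemma exists_first_exit {G Z : Type*} [Group G] {Φ : G → Z → Z} {S : Set G} {U : Set Z}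
    (hΦ : ∀ g h z, Φ (g * h) z = Φ g (Φ h z)) (hS1 : 1 ∈ S) (hSinv : S⁻¹ = S)
    (hS : ∀ g : G, ∃ n, g ∈ S ^ n) {n : ℕ} {z : Z} (hzn : ∀ g ∈ S ^ n, Φ g z ∈ U)
    (hz : ∃ g, Φ g z ∉ U) :
    ∃ q ∉ U, ∀ k < n, ∃ u ∈ S ^ (k + 1), ∀ h ∈ S ^ k, Φ h (Φ u q) ∈ U := by
  classical
  have hex : ∃ L, ∃ g ∈ S ^ L, Φ g z ∉ U := by
    obtain ⟨g, hg⟩ := hz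
    obtain ⟨L, hL⟩ := hS g
    exact ⟨L, g, hL, hg⟩
  obtain ⟨g, hg, hgU⟩ := Nat.find_spec hex
  have hmin : ∀ m < Nat.find hex, ∀ g ∈ S ^ m, Φ g z ∈ U := fun m hm g hg =>
    not_not.mp fun hgU => Nat.find_min hex hm ⟨g, hg, hgU⟩
  have hnL : n < Nat.find hex := by
    by_contra! hLn
    exact hgU (hzn g (pow_subset_pow_right hS1 hLn hg))
  refine ⟨Φ g z, hgU, fun k hk => ?_⟩
  -- Split the exit word as `b * a` with `b ∈ S ^ (k + 1)`: from `b⁻¹ q = a z`, every `h ∈ S ^ k`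
  -- reaches `h a z` with `h a` shorter than the first exit.
  obtain ⟨b, hb, a, ha, rfl⟩ : g ∈ S ^ (k + 1) * S ^ (Nat.find hex - 1 - k) := by
    rwa [← pow_add, show k + 1 + (Nat.find hex - 1 - k) = Nat.find hex by omega]
  refine ⟨b⁻¹, by rwa [← hSinv, inv_pow, Set.inv_mem_inv], fun h hh => ?_⟩
  rw [← hΦ, ← hΦ, show h * b⁻¹ * (b * a) = h * a by group]
  refine hmin (Nat.find hex - 1) (by omega) _ ?_
  rw [show Nat.find hex - 1 = k + (Nat.find hex - 1 - k) by omega, pow_add]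
  exact mul_mem_mul hh ha

lemma exists_mem_closure_range_forall_mem {Z : Type*} [TopologicalSpace Z] [CompactSpace Z]
    {F : ℕ → Set Z} (hF : ∀ k, IsClosed (F k)) {z : ℕ → Z} (hz : ∀ k n, k ≤ n → z n ∈ F k) :
    ∃ p ∈ closure (range z), ∀ k, p ∈ F k := by
  obtain ⟨p, -, hp⟩ := isCompact_univ.exists_mapClusterPt (f := atTop) (u := z) (by simp)
  refine ⟨p, isClosed_closure.mem_of_mapClusterPt hp
    (Eventually.of_forall fun n => subset_closure (mem_range_self n)),
    fun k => (hF k).mem_of_mapClusterPt hp (eventually_atTop.2 ⟨k, hz k⟩)⟩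

theorem IsDistal.isOpen_setOf_forall_mem {G Z : Type*} [Group G] [Group.FG G] [MetricSpace Z]
    [CompactSpace Z] {Φ : G → Z → Z} (hΦ : IsContAction Φ) (hd : IsDistal Φ) {U : Set Z}
    (hU : IsClopen U) : IsOpen {z | ∀ g, Φ g z ∈ U} := by
  obtain ⟨S, hSfin, hS1, hSinv, hS⟩ := Group.FG.exists_finite_symmetric_pow_cover G
  have hclosed : ∀ s : Set G, IsClosed {z | ∀ g ∈ s, Φ g z ∈ U} := fun s => by
    simp only [ofPred_forall]
    exact isClosed_biInter fun g _ => hU.isClosed.preimage (hΦ.1 g)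
  suffices ∃ r, ∀ z, (∀ g ∈ S ^ r, Φ g z ∈ U) → ∀ g, Φ g z ∈ U by
    obtain ⟨r, hr⟩ := this
    have hr' : {z | ∀ g, Φ g z ∈ U} = ⋂ g ∈ S ^ r, Φ g ⁻¹' U := by
      ext z
      simpa using ⟨fun h g _ => h g, hr z⟩
    rw [hr']
    exact (hSfin.pow r).isOpen_biInter fun g _ => hU.isOpen.preimage (hΦ.1 g)
  by_contra! h
  choose z hzr hz using h
  choose q hqU hq using fun n => exists_first_exit hΦ.2.2 hS1 hSinv hS (hzr n) (hz n)
  obtain ⟨P, -, hP⟩ := exists_mem_closure_range_forall_mem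
    (F := fun k => Uᶜ ∩ ⋃ u ∈ S ^ (k + 1), Φ u ⁻¹' {p | ∀ h ∈ S ^ k, Φ h p ∈ U})
    (fun k => hU.isOpen.isClosed_compl.inter <|
      (hSfin.pow _).isClosed_biUnion fun u _ => (hclosed _).preimage (hΦ.1 u))
    (z := fun n => q (n + 1))
    (fun k n hkn =>
      let ⟨u, hu, hqu⟩ := hq (n + 1) k (by omega)
      ⟨hqU _, mem_iUnion₂.2 ⟨u, hu, hqu⟩⟩)
  have hPv : ∀ k, ∃ v : G, ∀ h ∈ S ^ k, Φ h (Φ v P) ∈ U := fun k =>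
    let ⟨v, _, hv⟩ := mem_iUnion₂.1 (hP k).2
    ⟨v, hv⟩
  choose v hv using hPv
  obtain ⟨Q, hQP, hQ⟩ := exists_mem_closure_range_forall_mem (hclosed <| S ^ ·)
    (z := fun k => Φ (v k) P) (fun k n hkn h hh => hv n h (pow_subset_pow_right hS1 hkn hh))
  have hPQ : P ∈ closure (range fun g => Φ g Q) :=
    hd.mem_closure_range_of_mem_closure_range hΦ
      (closure_mono (by rintro _ ⟨k, rfl⟩; exact ⟨v k, rfl⟩) hQP)
  have hQU : closure (range fun g => Φ g Q) ⊆ {z | ∀ g, Φ g z ∈ U} := by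
    refine closure_minimal ?_ (by simpa using hclosed univ)
    rintro _ ⟨g, rfl⟩ g'
    obtain ⟨n, hn⟩ := hS (g' * g)
    exact hΦ.2.2 g' g Q ▸ hQ n _ hn
  exact (hP 0).1 (by simpa [hΦ.2.1] using hQU hPQ 1)

theorem IsDistal.exists_forall_dist_lt_forall_eq {G X F : Type*} [Group G] [Group.FG G]
    [MetricSpace X] [CompactSpace X] [TopologicalSpace F] [DiscreteTopology F] {T : G → X → X}
    (hT : IsContAction T) (hd : IsDistal T) {π : X → F} (hπ : Continuous π) :
    ∃ δ > (0 : ℝ), ∀ x y, dist x y < δ → ∀ g, π (T g x) = π (T g y) := by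
  have hU : IsClopen {p : X × X | π p.1 = π p.2} :=
    (isClopen_discrete (diagonal F)).preimage (hπ.prodMap hπ)
  have hR : {p : X × X | ∀ g, Prod.map (T g) (T g) p ∈ {p | π p.1 = π p.2}} ∈ 𝓝ˢ (diagonal X) :=
    (IsDistal.isOpen_setOf_forall_mem hT.prodMap hd.prodMap hU).mem_nhdsSet.2
      fun p (hp : p.1 = p.2) g => congrArg (fun x => π (T g x)) hp
  rw [nhdsSet_diagonal_eq_uniformity, Metric.mem_uniformity_dist] at hR
  obtain ⟨δ, hδ, hδR⟩ := hR
  exact ⟨δ, hδ, fun x y hxy => hδR hxy⟩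

lemma exists_continuous_fin_dist_lt {X : Type*} [MetricSpace X] [CompactSpace X]
    [TotallyDisconnectedSpace X] {ε : ℝ} (hε : 0 < ε) :
    ∃ (n : ℕ) (π : X → Fin n), Continuous π ∧ ∀ x y, π x = π y → dist x y < ε := by
  have hS : {p : X × X | dist p.1 p.2 < ε / 2} ∈ 𝓝ˢ (diagonal X) := by
    rw [nhdsSet_diagonal_eq_uniformity]
    exact Metric.dist_mem_uniformity (half_pos hε)
  obtain ⟨n, π, c, hπ, hc⟩ :=
    ContinuousMap.exists_finite_approximation_of_mem_nhds_diagonal (ContinuousMap.id X) hS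
  refine ⟨n, π, hπ, fun x y hxy => ?_⟩
  calc dist x y ≤ dist x (c (π x)) + dist y (c (π y)) := by
        rw [hxy]; exact dist_triangle_right _ _ _
    _ < ε / 2 + ε / 2 := add_lt_add (hc x) (hc y)
    _ = ε := add_halves ε

lemma IsPseudoOrbit.rel_orbit_one {G X : Type*} [Group G] [MetricSpace X] {T : G → X → X}
    {A : Set G} {δ : ℝ} {x : G → X} (hx : IsPseudoOrbit T A δ x)
    (hA : Subgroup.closure A = ⊤) (hT : IsContAction T) {r : X → X → Prop} (hr : Equivalence r)
    (hrT : ∀ g a b, r a b → r (T g a) (T g b)) (hδ : ∀ a b, dist a b < δ → r a b) (g : G) :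
    r (T g (x 1)) (x g) := by
  refine Subgroup.closure_induction_left (p := fun g _ => r (T g (x 1)) (x g))
    (by simpa [hT.2.1] using hr.refl (x 1)) (fun a ha g _ hg => ?_) (fun a ha g _ hg => ?_)
    (hA ▸ Subgroup.mem_top g)
  · rw [hT.2.2]
    exact hr.trans (hrT a _ _ hg) (hδ _ _ (hx a ha g))
  · have hstep : r (T a (x (a⁻¹ * g))) (T g (x 1)) :=
      hr.trans (by simpa using hδ _ _ (hx a ha (a⁻¹ * g))) (hr.symm hg)
    simpa [← hT.2.2, hT.2.1] using hr.symm (hrT a⁻¹ _ _ hstep)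

theorem distal_action_on_cantor_potp_general
    {G X : Type*} [Group G] [MetricSpace X] [CompactSpace X]
    [TotallyDisconnectedSpace X]
    (A : Finset G) (hAgen : Subgroup.closure (A : Set G) = ⊤)
    (T : G → X → X) (hT : IsContAction T)
    (hdistal : ∀ x y : X, x ≠ y → ∃ c > (0 : ℝ), ∀ g : G, c ≤ dist (T g x) (T g y)) :
    POTPWrt T (A : Set G) := by
  intro ε hε
  have : Group.FG G := ⟨⟨A, hAgen⟩⟩
  obtain ⟨n, π, hπ, hπε⟩ := exists_continuous_fin_dist_lt (X := X) hε
  obtain ⟨δ, hδ, hδπ⟩ := IsDistal.exists_forall_dist_lt_forall_eq hT hdistal hπ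
  refine ⟨δ, hδ, fun x hx => ⟨x 1, fun g => hπε _ _ ?_⟩⟩
  have hrel := hx.rel_orbit_one hAgen hT (r := fun a b => ∀ g, π (T g a) = π (T g b))
    ⟨fun _ _ => rfl, fun h g => (h g).symm, fun h₁ h₂ g => (h₁ g).trans (h₂ g)⟩
    (fun g a b hab g' => by simpa only [← hT.2.2] using hab (g' * g)) hδπ g 1
  simpa only [hT.2.1] using hrel

/-- Every distal action of an infinite finitely generated group on the Cantor space has the
pseudo-orbit tracing property. -/
theorem distal_action_on_cantor_potp
    {G X : Type*} [Group G] [Infinite G] [MetricSpace X] [CompactSpace X]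
    [TotallyDisconnectedSpace X] [Nonempty X]
    (hperfect : ∀ x : X, (nhdsWithin x {x}ᶜ).NeBot)
    (A : Finset G) (hAgen : Subgroup.closure (A : Set G) = ⊤)
    (T : G → X → X) (hT : IsContAction T)
    (hdistal : ∀ x y : X, x ≠ y → ∃ c > (0 : ℝ), ∀ g : G, c ≤ dist (T g x) (T g y)) :
    POTPWrt T (A : Set G) :=
  distal_action_on_cantor_potp_general A hAgen T hT hdistal
end
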